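/- arXiv:2503.07184 — 2 statements merged into one kernel-verified Lean document; each statement's English description precedes it below -/
import Mathlib

section
/- For p ≥ 1, real numbers a ≥ b ≥ 0, and any ε > 0, one has a^p − b^p ≤ ε·a^p + ((p−1)/ε)^{p−1}·(a−b)^p. -/
open Real

/-- Tangent line / Bernoulli step: `a^p - b^p ≤ p * a^(p-1) * (a-b)` for `0 < a`. -/
lemma rpow_sub_rpow_le_aux (p a b : ℝ) (hp : 1 ≤ p) (hb : 0 ≤ b) (hab : b ≤ a)
    (ha : 0 < a) : a ^ p - b ^ p ≤ p * a ^ (p - 1) * (a - b) := by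
  have hs : -1 ≤ b / a - 1 := by
    have : 0 ≤ b / a := div_nonneg hb ha.le
    linarith
  have key := one_add_mul_self_le_rpow_one_add hs hp
  have hba : 1 + (b / a - 1) = b / a := by ring
  rw [hba] at key
  -- multiply by a^p
  have hap : (0:ℝ) < a ^ p := Real.rpow_pos_of_pos ha p
  have h2 : (1 + p * (b / a - 1)) * a ^ p ≤ (b / a) ^ p * a ^ p :=
    mul_le_mul_of_nonneg_right key hap.le
  have hdiv : (b / a) ^ p * a ^ p = b ^ p := by
    rw [Real.div_rpow hb ha.le, div_mul_cancel₀]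
    exact hap.ne'
  have hpow : a ^ p / a = a ^ (p - 1) := by
    rw [Real.rpow_sub ha, Real.rpow_one]
  rw [hdiv] at h2
  have h3 : (1 + p * (b / a - 1)) * a ^ p = a ^ p - p * (a - b) * (a ^ p / a) := by
    field_simp
    ring
  rw [h3, hpow] at h2
  nlinarith [h2]

theorem power_difference_epsilon_inequality (p a b ε : ℝ)
    (hp : 1 ≤ p) (hb : 0 ≤ b) (hab : b ≤ a) (hε : 0 < ε) :
    a ^ p - b ^ p ≤ ε * a ^ p + ((p - 1) / ε) ^ (p - 1) * (a - b) ^ p := by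
  have ha : 0 ≤ a := hb.trans hab
  rcases eq_or_lt_of_le hp with hp1 | hp1
  · -- p = 1
    subst hp1
    simp only [sub_self, zero_div, Real.rpow_zero, Real.rpow_one, one_mul]
    nlinarith [mul_nonneg hε.le ha]
  · rcases eq_or_lt_of_le ha with ha0 | ha0
    · -- a = 0, hence b = 0
      have hb0 : b = 0 := le_antisymm (ha0 ▸ hab) hb
      subst hb0
      rw [← ha0]
      have h0 : (0:ℝ) ^ p = 0 := Real.zero_rpow (by linarith)
      simp [h0]
    -- main case: p > 1, a > 0
    set q : ℝ := p / (p - 1) with hq_def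
    have hpq : p.HolderConjugate q := Real.HolderConjugate.conjExponent hp1
    have hq0 : 0 < q := hpq.symm.pos
    have hp0 : 0 < p := hpq.pos
    have hεq : 0 < ε * q := mul_pos hε hq0
    set t : ℝ := (ε * q) ^ (1 / q) with ht_def
    have ht0 : 0 < t := Real.rpow_pos_of_pos hεq _
    have hX : 0 ≤ t * a ^ (p - 1) := by positivity
    have hY : 0 ≤ p * (a - b) / t := by
      have := sub_nonneg.2 hab; positivity
    have young := Real.young_inequality_of_nonneg hY hX hpq
    -- young : (p*(a-b)/t) * (t * a^(p-1)) ≤ (p*(a-b)/t)^p / p + (t*a^(p-1))^q / q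
    have hmain : a ^ p - b ^ p ≤ p * a ^ (p - 1) * (a - b) :=
      rpow_sub_rpow_le_aux p a b hp hb hab ha0
    -- compute the product
    have hprod : (p * (a - b) / t) * (t * a ^ (p - 1)) = p * a ^ (p - 1) * (a - b) := by
      field_simp
    -- compute (t * a^(p-1))^q / q = ε * a^p
    have htq : t ^ q = ε * q := by
      rw [ht_def, ← Real.rpow_mul hεq.le, one_div, inv_mul_cancel₀ hq0.ne', Real.rpow_one]
    have hp1' : p - 1 ≠ 0 := by linarith
    have hpq_mul : (p - 1) * q = p := by
      rw [hq_def, mul_comm, div_mul_cancel₀ _ hp1']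
    have hXq : (t * a ^ (p - 1)) ^ q / q = ε * a ^ p := by
      rw [Real.mul_rpow ht0.le (Real.rpow_nonneg ha0.le _), htq,
        ← Real.rpow_mul ha0.le, hpq_mul]
      field_simp
    -- compute (p*(a-b)/t)^p / p = ((p-1)/ε)^(p-1) * (a-b)^p
    have htp : t ^ p = (ε * q) ^ (p - 1) := by
      rw [ht_def, ← Real.rpow_mul hεq.le]
      congr 1
      rw [hq_def]
      field_simp
    have hYp : (p * (a - b) / t) ^ p / p = ((p - 1) / ε) ^ (p - 1) * (a - b) ^ p := by
      have hab' : 0 ≤ a - b := sub_nonneg.2 hab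
      rw [Real.div_rpow (by positivity) ht0.le, Real.mul_rpow hp0.le hab', htp]
      have hppp : p ^ p / p = p ^ (p - 1) := by
        rw [Real.rpow_sub hp0, Real.rpow_one]
      have hratio : p ^ (p - 1) / (ε * q) ^ (p - 1) = ((p - 1) / ε) ^ (p - 1) := by
        rw [← Real.div_rpow hp0.le hεq.le]
        congr 1
        rw [hq_def]
        field_simp
      rw [show p ^ p * (a - b) ^ p / (ε * q) ^ (p - 1) / p
          = p ^ p / p * ((a - b) ^ p / (ε * q) ^ (p - 1)) from by ring, hppp, ← hratio]
      ring
    calc a ^ p - b ^ p ≤ p * a ^ (p - 1) * (a - b) := hmain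
      _ = (p * (a - b) / t) * (t * a ^ (p - 1)) := hprod.symm
      _ ≤ (p * (a - b) / t) ^ p / p + (t * a ^ (p - 1)) ^ q / q := young
      _ = ε * a ^ p + ((p - 1) / ε) ^ (p - 1) * (a - b) ^ p := by
          rw [hXq, hYp]; ring
end

section
/- For 1 < p < ∞ define 𝔤₊(l,k) = (p−1)·∫_k^l |s|^{p−2}(s−k)₊ ds and 𝔤₋(l,k) = −(p−1)·∫_k^l |s|^{p−2}(s−k)₋ ds. Then there exists a constant C = C(p) ≥ 1 such that for all l, k ∈ ℝ: (1/C)·(|l|+|k|)^{p−2}·(l−k)₊² ≤ 𝔤₊(l,k) ≤ C·(|l|+|k|)^{p−2}·(l−k)₊², and similarly (1/C)·(|l|+|k|)^{p−2}·(l−k)₋² ≤ 𝔤₋(l,k) ≤ C·(|l|+|k|)^{p−2}·(l−k)₋². -/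
open MeasureTheory Set intervalIntegral

/-!
With `r = p - 2`, the positive part of `s - k` restricts the integral to `k ≤ s ≤ l`, and `s ↦ -s`
turns `𝔤₋` into `𝔤₊`, so everything reduces to `J(a, b) = ∫ s in a..b, |s| ^ r * (s - a)` for
`a ≤ b`. Put `A = |a| + |b|` and `h = b - a ≤ A`. If `4h ≤ A`, then `A/4 ≤ |s| ≤ A` on `[a, b]`,
so `|s| ^ r ≍ A ^ r` and `J ≍ A ^ r h ^ 2`. Otherwise `A ≍ h`: one direction still follows from
`|s| ≤ A`; for the other, if `r ≥ 0` the upper half of `[a, b]` contains an interval of length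
`h/8` on which `|s| ≥ h/8`, and if `r < 0` we use `J ≤ h ∫ s in -A..A, |s| ^ r ≍ h A ^ (r + 1)`.
-/

section WeightedIntegral

variable {f : ℝ → ℝ} {a b K : ℝ}

theorem integral_sub_left_endpoint (a b : ℝ) : ∫ s in a..b, (s - a) = (b - a) ^ 2 / 2 := by
  rw [integral_comp_sub_right (fun s => s), integral_id]
  ring

theorem integral_mul_sub_le (hab : a ≤ b) (hf : IntervalIntegrable f volume a b)
    (hK : ∀ x ∈ Icc a b, f x ≤ K) : ∫ s in a..b, f s * (s - a) ≤ K * (b - a) ^ 2 / 2 := by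
  calc ∫ s in a..b, f s * (s - a)
      ≤ ∫ s in a..b, K * (s - a) :=
        integral_mono_on hab (hf.mul_continuousOn (by fun_prop))
          ((by fun_prop : Continuous fun s => K * (s - a)).intervalIntegrable _ _)
          fun x hx => mul_le_mul_of_nonneg_right (hK x hx) (sub_nonneg.2 hx.1)
    _ = K * (b - a) ^ 2 / 2 := by
      rw [intervalIntegral.integral_const_mul, integral_sub_left_endpoint]; ring

theorem le_integral_mul_sub (hab : a ≤ b) (hf : IntervalIntegrable f volume a b)
    (hK : ∀ᵐ x ∂volume.restrict (Icc a b), K ≤ f x) :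
    K * (b - a) ^ 2 / 2 ≤ ∫ s in a..b, f s * (s - a) := by
  calc K * (b - a) ^ 2 / 2 = ∫ s in a..b, K * (s - a) := by
        rw [intervalIntegral.integral_const_mul, integral_sub_left_endpoint]; ring
    _ ≤ ∫ s in a..b, f s * (s - a) := by
      refine integral_mono_ae_restrict hab
        ((by fun_prop : Continuous fun s => K * (s - a)).intervalIntegrable _ _)
        (hf.mul_continuousOn (by fun_prop)) ?_
      filter_upwards [hK, ae_restrict_mem measurableSet_Icc] with x hKx hx
      exact mul_le_mul_of_nonneg_right hKx (sub_nonneg.2 hx.1)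

theorem integral_mul_sub_le_mul_integral (hab : a ≤ b) (hf : IntervalIntegrable f volume a b)
    (hf0 : ∀ x ∈ Icc a b, 0 ≤ f x) :
    ∫ s in a..b, f s * (s - a) ≤ (b - a) * ∫ s in a..b, f s := by
  rw [mul_comm, ← intervalIntegral.integral_mul_const]
  refine integral_mono_on hab (hf.mul_continuousOn (by fun_prop))
    (hf.mul_continuousOn continuousOn_const) fun x hx => ?_
  exact mul_le_mul_of_nonneg_left (by linarith [hx.2]) (hf0 x hx)

theorem mul_le_integral_of_le_on_Icc {u v : ℝ} (hau : a ≤ u) (huv : u ≤ v) (hvb : v ≤ b)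
    (hf : IntervalIntegrable f volume a b) (hf0 : ∀ x ∈ Icc a b, 0 ≤ f x)
    (hK : ∀ x ∈ Icc u v, K ≤ f x) : K * (v - u) ≤ ∫ s in a..b, f s := by
  calc K * (v - u) = ∫ _ in u..v, K := by simp [mul_comm]
    _ ≤ ∫ s in u..v, f s :=
      integral_mono_on huv intervalIntegrable_const
        (hf.mono_set (by
          rw [uIcc_of_le huv, uIcc_of_le ((hau.trans huv).trans hvb)]
          exact Icc_subset_Icc hau hvb)) hK
    _ ≤ ∫ s in a..b, f s := by
      refine integral_mono_interval hau huv hvb ?_ hf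
      filter_upwards [ae_restrict_mem measurableSet_Ioc] with x hx
      exact hf0 x (Ioc_subset_Icc_self hx)

end WeightedIntegral

section Geometry

variable {a b x : ℝ}

theorem abs_le_abs_add_abs_of_mem_Icc (hx : x ∈ Icc a b) : |x| ≤ |a| + |b| :=
  (abs_le_max_abs_abs hx.1 hx.2).trans (max_le_add_of_nonneg (abs_nonneg a) (abs_nonneg b))

theorem sub_le_abs_add_abs (a b : ℝ) : b - a ≤ |a| + |b| := by
  linarith [neg_abs_le a, le_abs_self b]

theorem abs_add_abs_le_four_mul_abs (hx : x ∈ Icc a b) (h : 4 * (b - a) ≤ |a| + |b|) :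
    |a| + |b| ≤ 4 * |x| := by
  have ha : |a| ≤ |x| + (b - a) := by
    have := abs_sub_abs_le_abs_sub a x
    rw [abs_sub_comm, abs_of_nonneg (sub_nonneg.2 hx.1)] at this
    linarith [hx.2]
  have hb : |b| ≤ |x| + (b - a) := by
    have := abs_sub_abs_le_abs_sub b x
    rw [abs_of_nonneg (sub_nonneg.2 hx.2)] at this
    linarith [hx.1]
  linarith

theorem exists_Icc_abs_ge (hab : a ≤ b) :
    ∃ u, (a + b) / 2 ≤ u ∧ u + (b - a) / 8 ≤ b ∧
      ∀ x ∈ Icc u (u + (b - a) / 8), (b - a) / 8 ≤ |x| := by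
  rcases le_total 0 (b - (b - a) / 4) with hc | hc
  · refine ⟨b - (b - a) / 8, by linarith, by linarith, fun x hx => ?_⟩
    exact le_abs.2 (Or.inl (by linarith [hx.1]))
  · refine ⟨(a + b) / 2, le_rfl, by linarith, fun x hx => ?_⟩
    exact le_abs.2 (Or.inr (by linarith [hx.2]))

end Geometry

section AbsRpow

variable {r : ℝ}

theorem intervalIntegrable_abs_rpow (hr : -1 < r) (a b : ℝ) :
    IntervalIntegrable (fun s => |s| ^ r) volume a b := by
  have from_zero : ∀ c, 0 ≤ c → IntervalIntegrable (fun s => |s| ^ r) volume 0 c := fun c hc =>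
    (intervalIntegrable_rpow' hr).congr fun x hx => by
      rw [uIoc_of_le hc] at hx
      simp only [abs_of_pos hx.1]
  have (c : ℝ) : IntervalIntegrable (fun s => |s| ^ r) volume 0 c := by
    rcases le_total 0 c with hc | hc
    · exact from_zero c hc
    · simpa using (IntervalIntegrable.iff_comp_neg).1 (from_zero (-c) (neg_nonneg.2 hc))
  exact (this a).symm.trans (this b)

theorem integral_abs_rpow_neg_self (hr : -1 < r) {c : ℝ} (hc : 0 ≤ c) :
    ∫ s in -c..c, |s| ^ r = 2 * c ^ (r + 1) / (r + 1) := by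
  have right : ∫ s in (0 : ℝ)..c, |s| ^ r = c ^ (r + 1) / (r + 1) := by
    rw [integral_congr (g := fun s => s ^ r) fun x hx => by
        rw [uIcc_of_le hc] at hx; simp only [abs_of_nonneg hx.1],
      integral_rpow (Or.inl hr), Real.zero_rpow (by linarith), sub_zero]
  have left : ∫ s in -c..0, |s| ^ r = ∫ s in (0 : ℝ)..c, |s| ^ r := by
    simpa using (integral_comp_neg (a := 0) (b := c) fun s => |s| ^ r).symm
  rw [← integral_add_adjacent_intervals (intervalIntegrable_abs_rpow hr _ _)
    (intervalIntegrable_abs_rpow hr _ _), left, right]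
  ring

end AbsRpow

section Bounds

variable {r a b : ℝ}

theorem integral_abs_rpow_mul_sub_le_of_nonneg (hr : 0 ≤ r) (hab : a ≤ b) :
    ∫ s in a..b, |s| ^ r * (s - a) ≤ (|a| + |b|) ^ r * (b - a) ^ 2 / 2 :=
  integral_mul_sub_le hab (intervalIntegrable_abs_rpow (by linarith) a b) fun _ hx =>
    Real.rpow_le_rpow (abs_nonneg _) (abs_le_abs_add_abs_of_mem_Icc hx) hr

theorem le_integral_abs_rpow_mul_sub_of_nonpos (hr₁ : -1 < r) (hr : r ≤ 0) (hab : a ≤ b) :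
    (|a| + |b|) ^ r * (b - a) ^ 2 / 2 ≤ ∫ s in a..b, |s| ^ r * (s - a) := by
  refine le_integral_mul_sub hab (intervalIntegrable_abs_rpow hr₁ a b) ?_
  filter_upwards [ae_restrict_of_ae (Measure.ae_ne volume 0), ae_restrict_mem measurableSet_Icc]
    with x hx₀ hx
  exact Real.rpow_le_rpow_of_nonpos (abs_pos.2 hx₀) (abs_le_abs_add_abs_of_mem_Icc hx) hr

theorem le_integral_abs_rpow_mul_sub_of_nonneg (hr : 0 ≤ r) (hab : a ≤ b) :
    ((|a| + |b|) / 32) ^ r * (b - a) ^ 2 / 16 ≤ ∫ s in a..b, |s| ^ r * (s - a) := by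
  have hf := intervalIntegrable_abs_rpow (r := r) (by linarith) a b
  rcases le_total (|a| + |b|) (4 * (b - a)) with hnear | hfar
  · obtain ⟨u, hmu, hub, hu⟩ := exists_Icc_abs_ge hab
    calc ((|a| + |b|) / 32) ^ r * (b - a) ^ 2 / 16
        ≤ ((b - a) / 8) ^ r * ((b - a) / 2) * (u + (b - a) / 8 - u) := by
          have : ((|a| + |b|) / 32) ^ r ≤ ((b - a) / 8) ^ r :=
            Real.rpow_le_rpow (by positivity) (by linarith) hr
          nlinarith [sq_nonneg (b - a)]
      _ ≤ ∫ s in a..b, |s| ^ r * (s - a) := by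
          refine mul_le_integral_of_le_on_Icc (by linarith) (by linarith) hub
            (hf.mul_continuousOn (by fun_prop)) (fun x hx => ?_) fun x hx => ?_
          · exact mul_nonneg (by positivity) (sub_nonneg.2 hx.1)
          · exact mul_le_mul (Real.rpow_le_rpow (by linarith) (hu x hx) hr) (by linarith [hx.1])
              (by linarith) (by positivity)
  · calc ((|a| + |b|) / 32) ^ r * (b - a) ^ 2 / 16
        ≤ ((|a| + |b|) / 4) ^ r * (b - a) ^ 2 / 2 := by
          have : ((|a| + |b|) / 32) ^ r ≤ ((|a| + |b|) / 4) ^ r :=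
            Real.rpow_le_rpow (by positivity) (by linarith [abs_nonneg a, abs_nonneg b]) hr
          nlinarith [sq_nonneg (b - a), Real.rpow_nonneg (by positivity : 0 ≤ (|a| + |b|) / 32) r]
      _ ≤ ∫ s in a..b, |s| ^ r * (s - a) :=
          le_integral_mul_sub hab hf <| ae_restrict_of_forall_mem measurableSet_Icc fun x hx =>
            Real.rpow_le_rpow (by positivity) (by linarith [abs_add_abs_le_four_mul_abs hx hfar]) hr

theorem integral_abs_rpow_mul_sub_le_of_nonpos (hr₁ : -1 < r) (hr : r ≤ 0) (hab : a ≤ b) :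
    ∫ s in a..b, |s| ^ r * (s - a) ≤ 8 / (r + 1) * ((|a| + |b|) / 4) ^ r * (b - a) ^ 2 := by
  obtain rfl | hab := hab.eq_or_lt
  · simp
  have hf := intervalIntegrable_abs_rpow hr₁ a b
  have hA : 0 < |a| + |b| := by linarith [sub_le_abs_add_abs a b]
  have hr1 : 0 < r + 1 := by linarith
  rcases le_total (|a| + |b|) (4 * (b - a)) with hnear | hfar
  · calc ∫ s in a..b, |s| ^ r * (s - a)
        ≤ (b - a) * ∫ s in a..b, |s| ^ r :=
          integral_mul_sub_le_mul_integral hab.le hf fun _ _ => by positivity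
      _ ≤ (b - a) * ∫ s in -(|a| + |b|)..(|a| + |b|), |s| ^ r := by
          refine mul_le_mul_of_nonneg_left (integral_mono_interval ?_ hab.le ?_
            (ae_of_all _ fun _ => by positivity) (intervalIntegrable_abs_rpow hr₁ _ _))
            (by linarith)
          · linarith [neg_abs_le a, abs_nonneg b]
          · linarith [le_abs_self b, abs_nonneg a]
      _ = 2 / (r + 1) * (|a| + |b|) ^ r * ((|a| + |b|) * (b - a)) := by
          rw [integral_abs_rpow_neg_self hr₁ hA.le, Real.rpow_add_one hA.ne']
          ring
      _ ≤ 2 / (r + 1) * (4 ^ (-r) * (|a| + |b|) ^ r) * (4 * (b - a) * (b - a)) := by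
          gcongr
          exact le_mul_of_one_le_left (by positivity) (Real.one_le_rpow (by norm_num) (by linarith))
      _ = 8 / (r + 1) * ((|a| + |b|) / 4) ^ r * (b - a) ^ 2 := by
          rw [Real.div_rpow hA.le (by norm_num), Real.rpow_neg (by norm_num)]
          ring
  · calc ∫ s in a..b, |s| ^ r * (s - a)
        ≤ ((|a| + |b|) / 4) ^ r * (b - a) ^ 2 / 2 :=
          integral_mul_sub_le hab.le hf fun x hx => Real.rpow_le_rpow_of_nonpos
            (by positivity) (by linarith [abs_add_abs_le_four_mul_abs hx hfar]) hr
      _ ≤ 8 / (r + 1) * ((|a| + |b|) / 4) ^ r * (b - a) ^ 2 := by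
          have hconst : 1 / 2 ≤ 8 / (r + 1) := by
            rw [div_le_div_iff₀ (by norm_num) hr1]; linarith
          have hX : 0 ≤ ((|a| + |b|) / 4) ^ r * (b - a) ^ 2 := by positivity
          linarith [mul_le_mul_of_nonneg_right hconst hX]

end Bounds

theorem exists_one_le_one_div_le_and_le {c : ℝ} (hc : 0 < c) (C : ℝ) :
    ∃ D ≥ (1 : ℝ), 1 / D ≤ c ∧ C ≤ D := by
  refine ⟨max 1 (max C (1 / c)), le_max_left _ _, ?_, (le_max_left _ _).trans (le_max_right _ _)⟩
  rw [one_div_le (by positivity) hc]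
  exact (le_max_right _ _).trans (le_max_right _ _)

section Comparability

variable {r : ℝ}

theorem exists_integral_abs_rpow_mul_sub_bounds (hr : -1 < r) :
    ∃ c > 0, ∃ C, ∀ a b : ℝ, a ≤ b →
      c * ((|a| + |b|) ^ r * (b - a) ^ 2) ≤ ∫ s in a..b, |s| ^ r * (s - a) ∧
      ∫ s in a..b, |s| ^ r * (s - a) ≤ C * ((|a| + |b|) ^ r * (b - a) ^ 2) := by
  rcases le_total 0 r with hr₀ | hr₀
  · refine ⟨1 / (16 * 32 ^ r), by positivity, 1 / 2, fun a b hab => ⟨?_, ?_⟩⟩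
    · refine le_of_eq_of_le ?_ (le_integral_abs_rpow_mul_sub_of_nonneg hr₀ hab)
      rw [Real.div_rpow (by positivity) (by norm_num)]
      ring
    · linarith [integral_abs_rpow_mul_sub_le_of_nonneg hr₀ hab]
  · refine ⟨1 / 2, by norm_num, 8 / (r + 1) * 4 ^ (-r), fun a b hab => ⟨?_, ?_⟩⟩
    · linarith [le_integral_abs_rpow_mul_sub_of_nonpos hr hr₀ hab]
    · refine (integral_abs_rpow_mul_sub_le_of_nonpos hr hr₀ hab).trans_eq ?_
      rw [Real.div_rpow (by positivity) (by norm_num), Real.rpow_neg (by norm_num)]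
      ring

theorem exists_integral_abs_rpow_mul_sub_comparable (hr : -1 < r) {κ : ℝ} (hκ : 0 < κ) :
    ∃ C ≥ (1 : ℝ), ∀ a b : ℝ, a ≤ b →
      1 / C * (|a| + |b|) ^ r * (b - a) ^ 2 ≤ κ * ∫ s in a..b, |s| ^ r * (s - a) ∧
      κ * (∫ s in a..b, |s| ^ r * (s - a)) ≤ C * (|a| + |b|) ^ r * (b - a) ^ 2 := by
  obtain ⟨c, hc, C, hbounds⟩ := exists_integral_abs_rpow_mul_sub_bounds hr
  obtain ⟨D, hD, hDc, hCD⟩ := exists_one_le_one_div_le_and_le (mul_pos hκ hc) (κ * C)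
  refine ⟨D, hD, fun a b hab => ?_⟩
  obtain ⟨hlower, hupper⟩ := hbounds a b hab
  have hX : 0 ≤ (|a| + |b|) ^ r * (b - a) ^ 2 := by positivity
  constructor
  · calc 1 / D * (|a| + |b|) ^ r * (b - a) ^ 2
        = 1 / D * ((|a| + |b|) ^ r * (b - a) ^ 2) := by ring
      _ ≤ κ * c * ((|a| + |b|) ^ r * (b - a) ^ 2) := mul_le_mul_of_nonneg_right hDc hX
      _ ≤ κ * ∫ s in a..b, |s| ^ r * (s - a) := by
        rw [mul_assoc]; exact mul_le_mul_of_nonneg_left hlower hκ.le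
  · calc κ * (∫ s in a..b, |s| ^ r * (s - a))
        ≤ κ * C * ((|a| + |b|) ^ r * (b - a) ^ 2) := by
          rw [mul_assoc]; exact mul_le_mul_of_nonneg_left hupper hκ.le
      _ ≤ D * ((|a| + |b|) ^ r * (b - a) ^ 2) := mul_le_mul_of_nonneg_right hCD hX
      _ = D * (|a| + |b|) ^ r * (b - a) ^ 2 := by ring

end Comparability

section PositivePart

variable {f : ℝ → ℝ} {k l : ℝ}

theorem integral_mul_max_sub_of_le (hkl : k ≤ l) :
    ∫ s in k..l, f s * max (s - k) 0 = ∫ s in k..l, f s * (s - k) :=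
  integral_congr fun x hx => by
    rw [uIcc_of_le hkl] at hx
    simp only [max_eq_left (sub_nonneg.2 hx.1)]

theorem integral_mul_max_sub_of_ge (hlk : l ≤ k) : ∫ s in k..l, f s * max (s - k) 0 = 0 := by
  rw [integral_congr (g := fun _ => 0) fun x hx => ?_, intervalIntegral.integral_zero]
  rw [uIcc_of_ge hlk] at hx
  simp only [max_eq_right (sub_nonpos.2 hx.2), mul_zero]

theorem integral_neg_mul_max_sub (hf : Function.Even f) (k l : ℝ) :
    ∫ s in -k..-l, f s * max (s - -k) 0 = -∫ s in k..l, f s * max (k - s) 0 := by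
  rw [← integral_comp_neg, integral_symm]
  simp only [hf _, sub_neg_eq_add, neg_add_eq_sub]

end PositivePart

theorem g_pm_two_sided_bound (p : ℝ) (hp : 1 < p) :
    ∃ C ≥ (1 : ℝ), ∀ l k : ℝ,
      ((1 / C) * (|l| + |k|) ^ (p - 2) * max (l - k) 0 ^ 2 ≤
          (p - 1) * ∫ s in k..l, |s| ^ (p - 2) * max (s - k) 0 ∧
        (p - 1) * (∫ s in k..l, |s| ^ (p - 2) * max (s - k) 0) ≤
          C * (|l| + |k|) ^ (p - 2) * max (l - k) 0 ^ 2) ∧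
      ((1 / C) * (|l| + |k|) ^ (p - 2) * max (k - l) 0 ^ 2 ≤
          -((p - 1) * ∫ s in k..l, |s| ^ (p - 2) * max (k - s) 0) ∧
        -((p - 1) * ∫ s in k..l, |s| ^ (p - 2) * max (k - s) 0) ≤
          C * (|l| + |k|) ^ (p - 2) * max (k - l) 0 ^ 2) := by
  obtain ⟨C, hC, hJ⟩ :=
    exists_integral_abs_rpow_mul_sub_comparable (r := p - 2) (by linarith) (sub_pos.2 hp)
  have g_plus (l k : ℝ) :
      1 / C * (|l| + |k|) ^ (p - 2) * max (l - k) 0 ^ 2 ≤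
          (p - 1) * ∫ s in k..l, |s| ^ (p - 2) * max (s - k) 0 ∧
        (p - 1) * (∫ s in k..l, |s| ^ (p - 2) * max (s - k) 0) ≤
          C * (|l| + |k|) ^ (p - 2) * max (l - k) 0 ^ 2 := by
    rcases le_total k l with hkl | hlk
    · rw [integral_mul_max_sub_of_le hkl, max_eq_left (sub_nonneg.2 hkl), add_comm |l|]
      exact hJ k l hkl
    · rw [integral_mul_max_sub_of_ge hlk, max_eq_right (sub_nonpos.2 hlk)]
      simp
  have heven : Function.Even fun s : ℝ => |s| ^ (p - 2) := fun s => by simp only [abs_neg]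
  refine ⟨C, hC, fun l k => ⟨g_plus l k, ?_⟩⟩
  simpa only [abs_neg, neg_sub_neg, integral_neg_mul_max_sub heven, mul_neg] using g_plus (-l) (-k)
end
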